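/- arXiv:2002.03183 — 7 statements merged into one kernel-verified Lean document; each statement's English description precedes it below -/
import Mathlib

section
/- Let G be a finite connected graph of order n ≥ 2. Then the remoteness ρ(G) = max over vertices v of (1/(n-1))·Σ_{w} d(v,w) satisfies ρ(G) ≤ n/2. -/
/-!
Fix `v` and write `d w = G.dist v w`. A shortest walk from `v` to `w` passes through a vertex
at each distance `0, …, d w - 1`, so `d w ≤ #{u | d u < d w}`. Summing over `w` counts the
pairs `(u, w)` with `d u < d w`; as this relation is asymmetric, `(u, w) ↦ {u, w}` embeds
them into the `2`-subsets of `V`. Hence `∑ w, d w ≤ n.choose 2 = n (n - 1) / 2`.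
-/

open Finset

theorem Finset.sum_card_filter_lt_le_choose_two {α β : Type*} [Fintype α] [DecidableEq α]
    [Preorder β] [DecidableLT β] (f : α → β) :
    ∑ a, #{b | f b < f a} ≤ (Fintype.card α).choose 2 := by
  rw [← card_sigma, ← card_univ, ← card_powersetCard]
  refine card_le_card_of_injOn (fun x => {x.1, x.2}) ?_ ?_
  · rintro ⟨a, b⟩ hab
    simp only [mem_coe, mem_sigma, mem_filter, mem_univ, true_and] at hab
    simp [card_pair (ne_of_apply_ne f hab.ne')]
  · rintro ⟨a, b⟩ hab ⟨c, d⟩ hcd h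
    simp only [mem_coe, mem_sigma, mem_filter, mem_univ, true_and] at hab hcd
    have h_set := congrArg ((↑) : Finset α → Set α) h
    simp only [coe_pair, Set.pair_eq_pair_iff] at h_set
    rcases h_set with ⟨rfl, rfl⟩ | ⟨rfl, rfl⟩
    · rfl
    · exact absurd hab (lt_asymm hcd)

namespace SimpleGraph

variable {V : Type*} {G : SimpleGraph V}

theorem Walk.dist_getVert_of_length_eq_dist {u v : V} (p : G.Walk u v)
    (hp : p.length = G.dist u v) {n : ℕ} (hn : n ≤ p.length) :
    G.dist u (p.getVert n) = n := by
  have h_take : G.dist u (p.getVert n) ≤ n := by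
    simpa [Walk.take_length, hn] using G.dist_le (p.take n)
  have h_drop : G.dist (p.getVert n) v ≤ p.length - n := by
    simpa [Walk.drop_length] using G.dist_le (p.drop n)
  have := (p.drop n).reachable.dist_triangle_right u
  omega

theorem Connected.dist_le_card_filter_dist_lt [Fintype V] (hG : G.Connected) (v w : V) :
    G.dist v w ≤ #{u | G.dist v u < G.dist v w} := by
  classical
  obtain ⟨p, hp⟩ := hG.exists_walk_length_eq_dist v w
  have h_dist (k : ℕ) (hk : k < G.dist v w) : G.dist v (p.getVert k) = k :=
    p.dist_getVert_of_length_eq_dist hp (by omega)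
  calc G.dist v w = #(range (G.dist v w)) := (card_range _).symm
    _ ≤ #{u | G.dist v u < G.dist v w} := by
      refine card_le_card_of_injOn p.getVert (fun k hk => ?_) (fun k hk l hl hkl => ?_)
      · simp only [coe_range, Set.mem_Iio] at hk
        simp [h_dist k hk, hk]
      · simp only [coe_range, Set.mem_Iio] at hk hl
        rw [← h_dist k hk, ← h_dist l hl, hkl]

theorem Connected.sum_dist_le_choose_two [Fintype V] (hG : G.Connected) (v : V) :
    ∑ w, G.dist v w ≤ (Fintype.card V).choose 2 := by
  classical
  calc ∑ w, G.dist v w ≤ ∑ w, #{u | G.dist v u < G.dist v w} :=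
        sum_le_sum fun w _ => hG.dist_le_card_filter_dist_lt v w
    _ ≤ (Fintype.card V).choose 2 := sum_card_filter_lt_le_choose_two (G.dist v)

end SimpleGraph

theorem remoteness_le_half_order_general {V : Type*} [Fintype V] [Nonempty V]
    (G : SimpleGraph V) (hG : G.Connected) :
    Finset.univ.sup' Finset.univ_nonempty
      (fun v => (∑ w, (G.dist v w : ℝ)) / ((Fintype.card V : ℝ) - 1))
      ≤ (Fintype.card V : ℝ) / 2 := by
  refine sup'_le _ _ fun v _ => div_le_of_le_mul₀ ?_ (by positivity) ?_
  · exact sub_nonneg.2 (Nat.one_le_cast.2 Fintype.card_pos)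
  · calc ∑ w, (G.dist v w : ℝ) = ((∑ w, G.dist v w : ℕ) : ℝ) := by push_cast; rfl
      _ ≤ ((Fintype.card V).choose 2 : ℕ) := by exact_mod_cast hG.sum_dist_le_choose_two v
      _ = (Fintype.card V : ℝ) / 2 * ((Fintype.card V : ℝ) - 1) := by
        rw [Nat.cast_choose_two]; ring

/-- The remoteness of a connected graph of order `n ≥ 2` is at most `n/2`. -/
theorem remoteness_le_half_order {V : Type*} [Fintype V] [Nonempty V]
    (G : SimpleGraph V) (hG : G.Connected) (hn : 2 ≤ Fintype.card V) :
    Finset.univ.sup' Finset.univ_nonempty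
      (fun v => (∑ w, (G.dist v w : ℝ)) / ((Fintype.card V : ℝ) - 1))
      ≤ (Fintype.card V : ℝ) / 2 :=
  remoteness_le_half_order_general G hG
end

section
/- Let u be a vertex of a connected triangle-free graph G of minimum degree δ, and suppose both the sphere N_i(u) of vertices at distance i from u and the sphere N_{i+1}(u) are nonempty. Then |N_{i-1}(u)| + |N_i(u)| + |N_{i+1}(u)| + |N_{i+2}(u)| ≥ 2δ. -/
/-!
Take `y` at distance `i + 1` from `u` and a neighbour `x` of `y` at distance `i`, the
second-to-last vertex of a shortest path from `u` to `y`. In a triangle-free graph adjacent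
vertices have no common neighbour, so `N(x)` and `N(y)` are disjoint and together contain at
least `2δ` vertices. Adjacent vertices have distances from `u` differing by at most one, so all
these vertices lie at distance between `i - 1` and `i + 2` from `u`.
-/

/-- The set of vertices at distance exactly `j` from `u` (with `j : ℤ`, so empty for `j < 0`). -/
noncomputable def SimpleGraph.isphere {V : Type*} [Fintype V] (G : SimpleGraph V) (u : V) (j : ℤ) : Finset V :=
  Finset.univ.filter (fun w => (G.dist u w : ℤ) = j)

open Finset

namespace SimpleGraph

variable {V : Type*} {G : SimpleGraph V}

lemma Adj.dist_le_dist_add_one {x z : V} (h : G.Adj x z) (u : V) :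
    G.dist u z ≤ G.dist u x + 1 := by
  rcases h.diff_dist_adj (u := u) with h | h | h <;> omega

lemma exists_adj_dist_eq_of_dist_eq_add_one {u y : V} {n : ℕ} (h : G.dist u y = n + 1) :
    ∃ x, G.Adj x y ∧ G.dist u x = n := by
  obtain ⟨p, hp⟩ := exists_walk_of_dist_ne_zero (G := G) (u := y) (v := u)
    (by rw [dist_comm, h]; omega)
  rw [dist_comm, h] at hp
  cases p with
  | nil => simp at hp
  | @cons _ x _ hyx q =>
    refine ⟨x, hyx.symm, le_antisymm ?_ ?_⟩
    · rw [Walk.length_cons, Nat.add_right_cancel_iff] at hp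
      exact dist_comm (G := G) ▸ hp ▸ dist_le q
    · have := hyx.symm.dist_le_dist_add_one u
      omega

lemma CliqueFree.disjoint_neighborFinset (h : G.CliqueFree 3) {x y : V} (hxy : G.Adj x y)
    [Fintype (G.neighborSet x)] [Fintype (G.neighborSet y)] :
    Disjoint (G.neighborFinset x) (G.neighborFinset y) := by
  classical
  rw [Finset.disjoint_left]
  intro z hzx hzy
  rw [mem_neighborFinset] at hzx hzy
  exact h {x, y, z} (is3Clique_triple_iff.mpr ⟨hxy, hzx, hzy⟩)

variable [Fintype V]

@[simp]
lemma mem_isphere {u w : V} {j : ℤ} : w ∈ G.isphere u j ↔ (G.dist u w : ℤ) = j := by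
  simp [isphere]

end SimpleGraph

open SimpleGraph

theorem four_spheres_triangle_free_general {V : Type*} [Fintype V] [DecidableEq V]
    (G : SimpleGraph V) [DecidableRel G.Adj]
    (htf : G.CliqueFree 3) (δ : ℕ) (hδ : ∀ v, δ ≤ G.degree v)
    (u : V) (i : ℕ)
    (h2 : (G.isphere u (i + 1)).Nonempty) :
    2 * δ ≤ (G.isphere u ((i : ℤ) - 1)).card + (G.isphere u i).card
      + (G.isphere u ((i : ℤ) + 1)).card + (G.isphere u ((i : ℤ) + 2)).card := by
  obtain ⟨y, hy⟩ := h2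
  rw [mem_isphere] at hy
  obtain ⟨x, hxy, hx⟩ := exists_adj_dist_eq_of_dist_eq_add_one (G := G) (u := u) (y := y) (n := i)
    (by omega)
  have hsub : G.neighborFinset x ∪ G.neighborFinset y ⊆ G.isphere u ((i : ℤ) - 1)
      ∪ G.isphere u i ∪ G.isphere u ((i : ℤ) + 1) ∪ G.isphere u ((i : ℤ) + 2) := by
    intro z hz
    simp only [mem_union, mem_neighborFinset, mem_isphere] at hz ⊢
    rcases hz with hz | hz <;>
    · have := hz.dist_le_dist_add_one u
      have := hz.symm.dist_le_dist_add_one u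
      omega
  calc 2 * δ ≤ G.degree x + G.degree y := by linarith [hδ x, hδ y]
    _ = #(G.neighborFinset x ∪ G.neighborFinset y) := by
      rw [card_union_of_disjoint (htf.disjoint_neighborFinset hxy), card_neighborFinset_eq_degree,
        card_neighborFinset_eq_degree]
    _ ≤ _ := card_le_card hsub
    _ ≤ _ := (card_union_le _ _).trans <| add_le_add_left
        ((card_union_le _ _).trans <| add_le_add_left (card_union_le _ _) _) _

/-- In a connected triangle-free graph of minimum degree `δ`, if the spheres of radii `i`
and `i+1` around `u` are nonempty, then the four spheres of radii `i-1, i, i+1, i+2`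
together contain at least `2δ` vertices. -/
theorem four_spheres_triangle_free {V : Type*} [Fintype V] [DecidableEq V]
    (G : SimpleGraph V) [DecidableRel G.Adj] (hG : G.Connected)
    (htf : G.CliqueFree 3) (δ : ℕ) (hδ : ∀ v, δ ≤ G.degree v)
    (u : V) (i : ℕ)
    (h1 : (G.isphere u i).Nonempty) (h2 : (G.isphere u (i + 1)).Nonempty) :
    2 * δ ≤ (G.isphere u ((i : ℤ) - 1)).card + (G.isphere u i).card
      + (G.isphere u ((i : ℤ) + 1)).card + (G.isphere u ((i : ℤ) + 2)).card :=
  four_spheres_triangle_free_general G htf δ hδ u i h2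
end

section
/- Let v₀ be a centre vertex of a connected graph G on at least three vertices with radius r. Then for every i with 1 ≤ i ≤ r-1, the sphere N_i(v₀) contains at least 2 vertices. -/
/-- The set of vertices at distance exactly `i` from `u`. -/
noncomputable def SimpleGraph.nsphere {V : Type*} [Fintype V] (G : SimpleGraph V) (u : V) (i : ℕ) : Finset V :=
  Finset.univ.filter (fun w => G.dist u w = i)

/-- The eccentricity of a vertex: the maximum distance from it to any vertex. -/
noncomputable def SimpleGraph.eccentSup {V : Type*} [Fintype V] (G : SimpleGraph V) (u : V) : ℕ :=
  Finset.univ.sup (fun w => G.dist u w)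

/-!
If the sphere `N_i(v₀)` with `1 ≤ i < r` were a single vertex `w`, every geodesic from `v₀` to a
vertex at distance at least `i` would pass through `w`. The neighbour `p` of `v₀` on a geodesic
to `w` then lies within `r - 1` of every vertex: of the far ones through `w`, of the near ones
(distance `< i`) through `v₀`. So `ecc(p) < r`, contradicting the centrality of `v₀`.
-/

namespace SimpleGraph

variable {V : Type*} {G : SimpleGraph V}

lemma Connected.exists_dist_eq_of_le_dist (hG : G.Connected) {u v : V} {i : ℕ}
    (hi : i ≤ G.dist u v) : ∃ w, G.dist u w = i ∧ G.dist w v = G.dist u v - i := by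
  obtain ⟨p, hp⟩ := hG.exists_walk_length_eq_dist u v
  have h_take : G.dist u (p.getVert i) ≤ i :=
    (dist_le (p.take i)).trans (by rw [Walk.take_length]; exact min_le_left _ _)
  have h_drop : G.dist (p.getVert i) v ≤ G.dist u v - i :=
    (dist_le (p.drop i)).trans (by rw [Walk.drop_length, hp])
  have h_tri : G.dist u v ≤ G.dist u (p.getVert i) + G.dist (p.getVert i) v := hG.dist_triangle
  exact ⟨p.getVert i, by omega, by omega⟩

variable [Fintype V]

lemma dist_le_eccentSup (u w : V) : G.dist u w ≤ G.eccentSup u :=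
  Finset.le_sup (f := fun w => G.dist u w) (Finset.mem_univ w)

lemma exists_dist_eq_eccentSup (u : V) : ∃ a, G.dist u a = G.eccentSup u := by
  obtain ⟨a, -, ha⟩ := Finset.exists_mem_eq_sup Finset.univ ⟨u, Finset.mem_univ u⟩
    (fun w => G.dist u w)
  exact ⟨a, ha.symm⟩

lemma mem_nsphere {u w : V} {i : ℕ} : w ∈ G.nsphere u i ↔ G.dist u w = i := by
  simp [nsphere]

lemma Connected.exists_eccentSup_lt_of_card_nsphere_le_one (hG : G.Connected) {u : V} {i : ℕ}
    (hi₀ : 1 ≤ i) (hir : i < G.eccentSup u) (hsphere : (G.nsphere u i).card ≤ 1) :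
    ∃ p, G.eccentSup p < G.eccentSup u := by
  have h_uniq : ∀ x y, G.dist u x = i → G.dist u y = i → x = y := fun x y hx hy =>
    Finset.card_le_one.mp hsphere x (mem_nsphere.mpr hx) y (mem_nsphere.mpr hy)
  obtain ⟨a, ha⟩ := G.exists_dist_eq_eccentSup u
  obtain ⟨w, hw, -⟩ := hG.exists_dist_eq_of_le_dist (show i ≤ G.dist u a by omega)
  obtain ⟨p, hup, hpw⟩ := hG.exists_dist_eq_of_le_dist (show 1 ≤ G.dist u w by omega)
  refine ⟨p, Nat.lt_of_le_sub_one (by omega) (Finset.sup_le fun x _ => ?_)⟩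
  have hux := G.dist_le_eccentSup u x
  by_cases hfar : i ≤ G.dist u x
  · obtain ⟨w', hw', hw'x⟩ := hG.exists_dist_eq_of_le_dist hfar
    obtain rfl := h_uniq w' w hw' hw
    have : G.dist p x ≤ G.dist p w' + G.dist w' x := hG.dist_triangle
    omega
  · have : G.dist p x ≤ G.dist p u + G.dist u x := hG.dist_triangle
    rw [dist_comm] at hup
    omega

end SimpleGraph

theorem sphere_card_two_of_center_general {V : Type*} [Fintype V]
    (G : SimpleGraph V) (hG : G.Connected)
    (v₀ : V) (hctr : ∀ v, G.eccentSup v₀ ≤ G.eccentSup v)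
    (r : ℕ) (hr : r = G.eccentSup v₀) :
    ∀ i, 1 ≤ i → i ≤ r - 1 → 2 ≤ (G.nsphere v₀ i).card := by
  intro i hi₀ hir
  by_contra! hcard
  obtain ⟨p, hp⟩ :=
    hG.exists_eccentSup_lt_of_card_nsphere_le_one hi₀ (by omega) (Nat.le_of_lt_succ hcard)
  exact (hctr p).not_gt hp

/-- If `v₀` is a centre vertex of a connected graph on at least three vertices with
radius `r`, then every sphere `N_i(v₀)` with `1 ≤ i ≤ r - 1` has at least two vertices. -/
theorem sphere_card_two_of_center {V : Type*} [Fintype V] [DecidableEq V]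
    (G : SimpleGraph V) (hG : G.Connected) (hn : 3 ≤ Fintype.card V)
    (v₀ : V) (hctr : ∀ v, G.eccentSup v₀ ≤ G.eccentSup v)
    (r : ℕ) (hr : r = G.eccentSup v₀) :
    ∀ i, 1 ≤ i → i ≤ r - 1 → 2 ≤ (G.nsphere v₀ i).card :=
  sphere_card_two_of_center_general G hG v₀ hctr r hr
end

section
/- Let v₀ be a centre vertex of a connected graph G with radius r ≥ 2, and suppose for some i with 2 ≤ i ≤ r-1 the sphere N_i(v₀) consists of a single vertex v_i. Let v₁ be a neighbour of v₀ lying on a shortest path from v₀ to v_i. Then ecc(v₁) ≤ r - 1. -/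
/-- The eccentricity of a vertex: the maximum distance from it to any vertex. -/
noncomputable def SimpleGraph.eccentN {V : Type*} [Fintype V] (G : SimpleGraph V) (u : V) : ℕ :=
  Finset.univ.sup (fun w => G.dist u w)

/-!
A vertex `w` with `d(v₀, w) < i` is within `1 + (i - 1) = i ≤ r - 1` of `v₁`, going through `v₀`.
Every farther `w` lies beyond the sphere `N_i(v₀) = {vᵢ}`, so a geodesic from `v₀` to `w` passes
through `vᵢ`; going from `v₁` through `vᵢ` then gives `d(v₁, w) ≤ (i - 1) + (d(v₀, w) - i) ≤ r - 1`.
-/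

namespace SimpleGraph

variable {V : Type*} {G : SimpleGraph V} {u v w : V}

lemma Walk.dist_getVert_le (p : G.Walk u v) (k : ℕ) : G.dist u (p.getVert k) ≤ k :=
  (dist_le (p.take k)).trans <| by simp

lemma Walk.dist_getVert_right_le (p : G.Walk u v) (k : ℕ) :
    G.dist (p.getVert k) v ≤ p.length - k :=
  (dist_le (p.drop k)).trans_eq (p.drop_length k)

/-- The `k`-th vertex of a shortest `u`–`w` walk splits `dist u w` as `k + (dist u w - k)`. -/
lemma Reachable.exists_dist_eq_of_le_dist (h : G.Reachable u w) {k : ℕ} (hk : k ≤ G.dist u w) :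
    ∃ x, G.dist u x = k ∧ G.dist x w = G.dist u w - k := by
  obtain ⟨p, hp⟩ := h.exists_walk_length_eq_dist
  have hux := p.dist_getVert_le k
  have hxw := hp ▸ p.dist_getVert_right_le k
  have htri := (p.take k).reachable.dist_triangle_left w
  exact ⟨p.getVert k, by omega, by omega⟩

lemma dist_eq_sub_of_nsphere_eq_singleton [Fintype V] (h : G.Reachable u w) {i : ℕ} {x : V}
    (hsphere : G.nsphere u i = {x}) (hi : i ≤ G.dist u w) :
    G.dist x w = G.dist u w - i := by
  obtain ⟨y, huy, hyw⟩ := h.exists_dist_eq_of_le_dist hi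
  have hy : y ∈ G.nsphere u i := by simp [nsphere, huy]
  rw [hsphere, Finset.mem_singleton] at hy
  rwa [← hy]

lemma dist_le_eccentN [Fintype V] (u w : V) : G.dist u w ≤ G.eccentN u :=
  Finset.le_sup (f := G.dist u) (Finset.mem_univ w)

end SimpleGraph

open SimpleGraph

theorem eccent_le_of_cut_sphere_general {V : Type*} [Fintype V]
    (G : SimpleGraph V) (hG : G.Connected)
    (v₀ : V)
    (r : ℕ) (hr : r = G.eccentN v₀)
    (i : ℕ) (hi2 : 2 ≤ i) (hir : i ≤ r - 1)
    (vi : V) (hsphere : G.nsphere v₀ i = {vi})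
    (v₁ : V) (hadj : G.Adj v₀ v₁) (hshort : G.dist v₁ vi = i - 1) :
    G.eccentN v₁ ≤ r - 1 := by
  refine Finset.sup_le fun w _ ↦ ?_
  have hw : G.dist v₀ w ≤ r := hr ▸ G.dist_le_eccentN v₀ w
  have h10 : G.dist v₁ v₀ = 1 := dist_eq_one_iff_adj.mpr hadj.symm
  by_cases hnear : G.dist v₀ w < i
  · have := hG.dist_triangle (u := v₁) (v := v₀) (w := w)
    omega
  · have hfar := dist_eq_sub_of_nsphere_eq_singleton (hG v₀ w) hsphere (by omega)
    have := hG.dist_triangle (u := v₁) (v := vi) (w := w)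
    omega

/-- If `v₀` is a centre vertex of a connected graph of radius `r ≥ 2`, the sphere
`N_i(v₀)` (with `2 ≤ i ≤ r - 1`) consists of a single vertex `vᵢ`, and `v₁` is a
neighbour of `v₀` on a shortest `v₀–vᵢ` path, then `ecc(v₁) ≤ r - 1`. -/
theorem eccent_le_of_cut_sphere {V : Type*} [Fintype V] [DecidableEq V]
    (G : SimpleGraph V) (hG : G.Connected)
    (v₀ : V) (hctr : ∀ v, G.eccentN v₀ ≤ G.eccentN v)
    (r : ℕ) (hr : r = G.eccentN v₀) (hr2 : 2 ≤ r)
    (i : ℕ) (hi2 : 2 ≤ i) (hir : i ≤ r - 1)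
    (vi : V) (hsphere : G.nsphere v₀ i = {vi})
    (v₁ : V) (hadj : G.Adj v₀ v₁) (hshort : G.dist v₁ vi = i - 1) :
    G.eccentN v₁ ≤ r - 1 :=
  eccent_le_of_cut_sphere_general G hG v₀ r hr i hi2 hir vi hsphere v₁ hadj hshort
end

section
/- Let v be a vertex of a C₄-free graph G of minimum degree δ. Then the number of vertices at distance at most 2 from v is at least δ² - 2⌊δ/2⌋ + 1. -/
/-- A graph contains a 4-cycle as a (not necessarily induced) subgraph. -/
def SimpleGraph.HasC4 {V : Type*} (G : SimpleGraph V) : Prop :=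
  ∃ a b c d : V, a ≠ c ∧ b ≠ d ∧ G.Adj a b ∧ G.Adj b c ∧ G.Adj c d ∧ G.Adj d a

/-!
Let `A = N(v)`, `d = |A| ≥ δ`. Two distinct vertices of a `C₄`-free graph have at most one
common neighbour. Hence every `u ∈ A` has at most one neighbour inside `A`, so the number `M`
of ordered edges inside `A` is even and at most `d`, i.e. `M ≤ 2⌊d/2⌋`; and the sets
`N(u) \ ({v} ∪ A)`, `u ∈ A`, are pairwise disjoint, since any two of them already share `v`
as a common neighbour. These sets together have at least `dδ - d - M` elements, so the ball of
radius two has at least `1 + dδ - 2⌊d/2⌋` vertices, which for `δ ≥ 2` is nondecreasing in `d`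
and hence at least `1 + δ² - 2⌊δ/2⌋`.
-/

open Finset

theorem Nat.sq_sub_two_mul_div_two_le {δ d M X : ℕ} (hδd : δ ≤ d) (hM : M ≤ 2 * (d / 2))
    (h : d * δ ≤ X + d + M) : δ ^ 2 - 2 * (δ / 2) ≤ d + X := by
  rcases le_or_gt δ 1 with hδ | hδ
  · interval_cases δ <;> omega
  have hmono : δ * δ - 2 * (δ / 2) ≤ d * δ - 2 * (d / 2) := by
    obtain ⟨e, rfl⟩ := Nat.exists_eq_add_of_le hδd
    have : 2 * ((δ + e) / 2) ≤ 2 * (δ / 2) + e + 1 := by omega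
    have : (δ + e) * δ = δ * δ + e * δ := by ring
    have : 2 * e ≤ e * δ := by nlinarith
    omega
  rw [sq]
  omega

namespace SimpleGraph

variable {V : Type*} [Fintype V] [DecidableEq V] (G : SimpleGraph V) [DecidableRel G.Adj]

theorem even_sum_card_neighborFinset_inter (s : Finset V) :
    Even (∑ u ∈ s, #(G.neighborFinset u ∩ s)) := by
  have h (u : (s : Set V)) : (G.induce (s : Set V)).degree u = #(G.neighborFinset u ∩ s) := by
    -- `convert` reconciles the `Fintype ↥s` instance coming from `Finset` with the one from `Set`.
    convert congrArg card (G.map_neighborFinset_induce u) using 1 <;> simp; congr!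
  rw [← sum_coe_sort s]
  simp_rw [← h]
  exact ⟨_, (G.induce _).sum_degrees_eq_twice_card_edges.trans (two_mul _)⟩

variable {G}

theorem card_inter_neighborFinset_le_one (hC4 : ¬ G.HasC4) {a c : V} (hac : a ≠ c) :
    #(G.neighborFinset a ∩ G.neighborFinset c) ≤ 1 := by
  refine card_le_one.mpr fun x hx y hy => by_contra fun hxy => hC4 ?_
  simp only [mem_inter, mem_neighborFinset] at hx hy
  exact ⟨a, x, c, y, hac, hxy, hx.1, hx.2.symm, hy.2, hy.1.symm⟩

theorem disjoint_erase_neighborFinset (hC4 : ¬ G.HasC4) {v u₁ u₂ : V} (h₁ : G.Adj v u₁)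
    (h₂ : G.Adj v u₂) (hne : u₁ ≠ u₂) :
    Disjoint ((G.neighborFinset u₁).erase v) ((G.neighborFinset u₂).erase v) := by
  refine Finset.disjoint_left.mpr fun w hw₁ hw₂ => ne_of_mem_erase hw₁ ?_
  refine card_le_one.mp (card_inter_neighborFinset_le_one hC4 hne) w ?_ v ?_
  · exact mem_inter.mpr ⟨mem_of_mem_erase hw₁, mem_of_mem_erase hw₂⟩
  · simpa [mem_neighborFinset] using ⟨h₁.symm, h₂.symm⟩

theorem degree_le_card_sdiff_insert_add {u v : V} (h : G.Adj u v) (s : Finset V) :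
    G.degree u ≤ #(G.neighborFinset u \ insert v s) + #(G.neighborFinset u ∩ s) + 1 := by
  have hv : v ∈ G.neighborFinset u := (mem_neighborFinset ..).mpr h
  rw [← card_neighborFinset_eq_degree, ← card_sdiff_add_card_inter _ (insert v s),
    inter_insert_of_mem hv, add_assoc]
  exact Nat.add_le_add_left (card_insert_le _ _) _

theorem card_add_sum_card_le_ncard_walk_length_le_two (hC4 : ¬ G.HasC4) (v : V) :
    1 + #(G.neighborFinset v) +
        ∑ u ∈ G.neighborFinset v, #(G.neighborFinset u \ insert v (G.neighborFinset v)) ≤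
      {w : V | ∃ p : G.Walk v w, p.length ≤ 2}.ncard := by
  set A := G.neighborFinset v
  set B := fun u => G.neighborFinset u \ insert v A
  have hB (u : V) : B u ⊆ (G.neighborFinset u).erase v := fun w hw =>
    mem_erase.mpr ⟨fun h => (mem_sdiff.mp hw).2 (h ▸ mem_insert_self _ _), (mem_sdiff.mp hw).1⟩
  have hdisj : (A : Set V).PairwiseDisjoint B := fun u₁ h₁ u₂ h₂ hne =>
    (disjoint_erase_neighborFinset hC4 ((mem_neighborFinset ..).mp h₁)
      ((mem_neighborFinset ..).mp h₂) hne).mono (hB u₁) (hB u₂)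
  have hvA : v ∉ A ∪ A.biUnion B := by simp [A, B]
  have hAB : Disjoint A (A.biUnion B) := Finset.disjoint_right.mpr fun w hw hwA => by
    obtain ⟨u, -, hwu⟩ := mem_biUnion.mp hw
    exact (mem_sdiff.mp hwu).2 (mem_insert_of_mem hwA)
  have hsub : (↑(insert v (A ∪ A.biUnion B)) : Set V) ⊆
      {w : V | ∃ p : G.Walk v w, p.length ≤ 2} := by
    intro w hw
    simp only [coe_insert, coe_union, coe_biUnion, Set.mem_insert_iff, Set.mem_union,
      Set.mem_iUnion, mem_coe] at hw
    rcases hw with rfl | hw | ⟨u, hu, hw⟩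
    · exact ⟨.nil, by simp⟩
    · exact ⟨.cons ((mem_neighborFinset ..).mp hw) .nil, by simp⟩
    · have hvu := (mem_neighborFinset ..).mp hu
      have huw := (mem_neighborFinset ..).mp (mem_sdiff.mp hw).1
      exact ⟨.cons hvu (.cons huw .nil), by simp⟩
  calc 1 + #A + ∑ u ∈ A, #(B u) = #(insert v (A ∪ A.biUnion B)) := by
        rw [card_insert_of_notMem hvA, card_union_of_disjoint hAB, card_biUnion hdisj]
        omega
    _ ≤ _ := by
        rw [← Set.ncard_coe_finset]
        exact Set.ncard_le_ncard hsub (Set.toFinite _)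

end SimpleGraph

open SimpleGraph in
/-- In a `C₄`-free graph of minimum degree `δ`, every vertex has at least
`δ² - 2⌊δ/2⌋ + 1` vertices within distance two of it. -/
theorem card_ball_two_C4_free {V : Type*} [Fintype V] [DecidableEq V]
    (G : SimpleGraph V) [DecidableRel G.Adj] (hC4 : ¬ G.HasC4)
    (δ : ℕ) (hδ : ∀ v, δ ≤ G.degree v) (v : V) :
    δ ^ 2 - 2 * (δ / 2) + 1 ≤ {w : V | ∃ p : G.Walk v w, p.length ≤ 2}.ncard := by
  set A := G.neighborFinset v
  set M := ∑ u ∈ A, #(G.neighborFinset u ∩ A)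
  have hdeg : #A * δ ≤ ∑ u ∈ A, #(G.neighborFinset u \ insert v A) + #A + M := calc
    #A * δ = ∑ _u ∈ A, δ := by rw [sum_const, smul_eq_mul]
    _ ≤ ∑ u ∈ A, (#(G.neighborFinset u \ insert v A) + #(G.neighborFinset u ∩ A) + 1) :=
        sum_le_sum fun u hu =>
          (hδ u).trans (degree_le_card_sdiff_insert_add ((mem_neighborFinset ..).mp hu).symm A)
    _ = _ := by rw [sum_add_distrib, sum_add_distrib, card_eq_sum_ones A]; ring
  have hM_le : M ≤ #A := by
    rw [card_eq_sum_ones]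
    exact sum_le_sum fun u hu =>
      card_inter_neighborFinset_le_one hC4 ((mem_neighborFinset ..).mp hu).ne'
  obtain ⟨k, hk⟩ := even_sum_card_neighborFinset_inter G A
  have hbound := Nat.sq_sub_two_mul_div_two_le (d := #A) (hδ v) (by omega : M ≤ 2 * (#A / 2)) hdeg
  have hball : 1 + #A + ∑ u ∈ A, #(G.neighborFinset u \ insert v A) ≤ _ :=
    card_add_sum_card_le_ncard_walk_length_le_two hC4 v
  omega
end

section
/- Let X = (n₀, n₁, …, n_d) be a finite sequence of nonnegative integers satisfying: n₀ = 1; Σᵢ nᵢ = n; nᵢ ≥ 1 for 0 ≤ i ≤ d; n_{i-1}+nᵢ+n_{i+1}+n_{i+2} ≥ 2δ whenever nᵢ, n_{i+1} ≥ 1 (with n_j = 0 outside 0..d); n_{i-1}+nᵢ+n_{i+1} ≥ δ+1 whenever nᵢ ≥ 1; and if n_{d-1} ≤ δ-1 then n_{d-1}+n_d ≥ 2δ. If δ ≥ 2, n ≥ 6δ, and X maximizes g(X) = Σᵢ i·nᵢ among all such sequences (over all lengths d), then n₂ = δ - 1. -/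
/-- `f : ℤ → ℕ` represents a sequence `(n₀, …, n_d)` (zero outside `[0, d]`)
satisfying conditions (A1)–(A6) with parameters `n`, `δ`, where additionally
`nᵢ ≥ 1` for all `0 ≤ i ≤ d`. -/
def IsGoodSeq (n δ : ℕ) (d : ℕ) (f : ℤ → ℕ) : Prop :=
  (∀ j : ℤ, (j < 0 ∨ (d : ℤ) < j) → f j = 0) ∧
  f 0 = 1 ∧
  (∑ j ∈ Finset.Icc (0 : ℤ) (d : ℤ), f j) = n ∧
  (∀ i : ℤ, 0 ≤ i → i ≤ (d : ℤ) → 1 ≤ f i) ∧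
  (∀ i : ℤ, 0 ≤ i → 1 ≤ f i → 1 ≤ f (i + 1) →
    2 * δ ≤ f (i - 1) + f i + f (i + 1) + f (i + 2)) ∧
  (∀ i : ℤ, 0 ≤ i → 1 ≤ f i → δ + 1 ≤ f (i - 1) + f i + f (i + 1)) ∧
  (f ((d : ℤ) - 1) ≤ δ - 1 → 2 * δ ≤ f ((d : ℤ) - 1) + f (d : ℤ))

/-- The weight `g(X) = Σᵢ i·nᵢ` of a sequence. -/
noncomputable def gval (d : ℕ) (f : ℤ → ℕ) : ℤ :=
  ∑ j ∈ Finset.Icc (0 : ℤ) (d : ℤ), j * (f j : ℤ)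

/-! Moving one unit of mass from position `a` to `a + 1` raises `g` by one. Such a move keeps
(A1)–(A6) as long as the window sums ending at `a` have slack, so for a maximal `X` none of
these moves may be legal. By (A5) at `0`, `n₁ ≥ δ`. If `d = 1`, then `n₁ = n - 1` is large and a
unit can be moved to a new position `2`; otherwise moving a unit from `1` to `2` is legal unless
`n₁ = δ`. Then (A4) at `0` gives `n₂ ≥ δ - 1`, and if `n₂ ≥ δ` a unit can be moved from `2` to
`3` (to a new position when `d = 2`), where `n ≥ 6δ` supplies the slack at the end of short
sequences. -/

open Finset

theorem sum_Icc_zero_eq_of_le {M : Type*} [AddCommMonoid M] {F : ℤ → M} {d k : ℕ}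
    (hF : ∀ j, (d : ℤ) < j → F j = 0) (hdk : d ≤ k) :
    ∑ j ∈ Icc 0 (k : ℤ), F j = ∑ j ∈ Icc 0 (d : ℤ), F j := by
  refine (sum_subset (Icc_subset_Icc le_rfl (by omega)) fun j hjk hjd => hF j ?_).symm
  simp only [mem_Icc] at hjk hjd
  omega

def transfer (f : ℤ → ℕ) (a b : ℤ) : ℤ → ℕ :=
  f + Pi.single b 1 - Pi.single a 1

section Transfer

variable {f : ℤ → ℕ} {a b : ℤ}

theorem transfer_apply_of_ne {j : ℤ} (hja : j ≠ a) (hjb : j ≠ b) : transfer f a b j = f j := by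
  simp [transfer, hja, hjb]

theorem transfer_apply_left (hab : a ≠ b) : transfer f a b a = f a - 1 := by
  simp [transfer, hab]

theorem transfer_apply_right (hab : a ≠ b) : transfer f a b b = f b + 1 := by
  simp [transfer, hab.symm]

theorem transfer_add_single (hfa : 1 ≤ f a) :
    transfer f a b + Pi.single a 1 = f + Pi.single b 1 := by
  funext j
  simp only [transfer, Pi.add_apply, Pi.sub_apply, Pi.single_apply]
  split_ifs <;> grind

theorem transfer_apply_add_ite (hfa : 1 ≤ f a) (j : ℤ) :
    transfer f a b j + (if j = a then 1 else 0) = f j + (if j = b then 1 else 0) := by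
  simpa [Pi.single_apply] using congrFun (transfer_add_single (b := b) hfa) j

theorem sum_transfer {s : Finset ℤ} (hfa : 1 ≤ f a) (ha : a ∈ s) (hb : b ∈ s) :
    ∑ j ∈ s, transfer f a b j = ∑ j ∈ s, f j := by
  have h := congrArg (fun g : ℤ → ℕ => ∑ j ∈ s, g j) (transfer_add_single (b := b) hfa)
  simpa [sum_add_distrib, ha, hb] using h

theorem sum_mul_transfer {s : Finset ℤ} (hfa : 1 ≤ f a) (ha : a ∈ s) (hb : b ∈ s) :
    ∑ j ∈ s, j * (transfer f a b j : ℤ) = ∑ j ∈ s, j * (f j : ℤ) + (b - a) := by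
  have h : ∀ j, j * (transfer f a b j : ℤ) =
      j * f j + (if j = b then j else 0) - (if j = a then j else 0) := by
    intro j
    have := transfer_apply_add_ite (b := b) hfa j
    have hcast : (transfer f a b j : ℤ) =
        f j + (if j = b then 1 else 0) - (if j = a then 1 else 0) := by
      split_ifs at this ⊢ <;> omega
    rw [hcast]
    split_ifs <;> ring
  simp only [h, sum_sub_distrib, sum_add_distrib, sum_ite_eq', ha, hb,
    if_true]
  ring

theorem gval_transfer {d : ℕ} (hfa : 1 ≤ f a) (ha : a ∈ Icc 0 (d : ℤ)) (hb : b ∈ Icc 0 (d : ℤ)) :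
    gval d (transfer f a b) = gval d f + (b - a) :=
  sum_mul_transfer hfa ha hb

theorem gval_transfer_succ {d : ℕ} (hfa : 1 ≤ f a) (ha : 0 ≤ a)
    (had : a + 1 ≤ d) : gval d (transfer f a (a + 1)) = gval d f + 1 := by
  rw [gval_transfer hfa (mem_Icc.2 ⟨ha, by omega⟩) (mem_Icc.2 ⟨by omega, had⟩)]
  ring

theorem gval_transfer_last {d : ℕ} (hfd : 1 ≤ f d) (hz : ∀ j, (d : ℤ) < j → f j = 0) :
    gval (d + 1) (transfer f d (d + 1)) = gval d f + 1 := by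
  have hgval : gval (d + 1) f = gval d f :=
    sum_Icc_zero_eq_of_le (fun j hj => by rw [hz j hj, Nat.cast_zero, mul_zero]) d.le_succ
  rw [gval_transfer hfd (mem_Icc.2 ⟨by omega, by omega⟩) (mem_Icc.2 ⟨by omega, by omega⟩), hgval]
  ring

end Transfer

section Window

/- Moving a unit from `a` to `a + 1` changes a window sum only if the window contains exactly one
of the two positions; it drops (by one) only for the window ending at `a`. -/

variable {f : ℤ → ℕ} {a i : ℤ} {m : ℕ}

theorem le_window4_transfer_succ (hfa : 1 ≤ f a)
    (hf : m ≤ f (i - 1) + f i + f (i + 1) + f (i + 2))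
    (hslack : i + 2 = a → m + 1 ≤ f (i - 1) + f i + f (i + 1) + f (i + 2)) :
    m ≤ transfer f a (a + 1) (i - 1) + transfer f a (a + 1) i +
      transfer f a (a + 1) (i + 1) + transfer f a (a + 1) (i + 2) := by
  have h := transfer_apply_add_ite (b := a + 1) hfa
  have h₁ := h (i - 1); have h₂ := h i; have h₃ := h (i + 1); have h₄ := h (i + 2)
  split_ifs at h₁ h₂ h₃ h₄ <;> omega

theorem le_window3_transfer_succ (hfa : 1 ≤ f a)
    (hf : m ≤ f (i - 1) + f i + f (i + 1))
    (hslack : i + 1 = a → m + 1 ≤ f (i - 1) + f i + f (i + 1)) :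
    m ≤ transfer f a (a + 1) (i - 1) + transfer f a (a + 1) i + transfer f a (a + 1) (i + 1) := by
  have h := transfer_apply_add_ite (b := a + 1) hfa
  have h₁ := h (i - 1); have h₂ := h i; have h₃ := h (i + 1)
  split_ifs at h₁ h₂ h₃ <;> omega

end Window

namespace IsGoodSeq

variable {n δ d : ℕ} {f : ℤ → ℕ}

theorem transfer_succ {a : ℤ} (hf : IsGoodSeq n δ d f) (had : a + 1 ≤ d) (hfa : 2 ≤ f a)
    (h4 : 2 ≤ a → 2 * δ + 1 ≤ f (a - 3) + f (a - 2) + f (a - 1) + f a)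
    (h5 : δ + 2 ≤ f (a - 2) + f (a - 1) + f a)
    (h6 : a + 1 = d → f a ≤ δ → 2 * δ ≤ f a + f (a + 1)) :
    IsGoodSeq n δ d (transfer f a (a + 1)) := by
  obtain ⟨hz, h0, hsum, hpos, hA4, hA5, hA6⟩ := hf
  have ha : 1 ≤ a := by
    by_contra
    rcases (by omega : a < 0 ∨ a = 0) with ha | rfl
    · have := hz a (.inl ha); omega
    · omega
  have hne : a ≠ a + 1 := by omega
  have hg_out : ∀ j, (j < 0 ∨ (d : ℤ) < j) → transfer f a (a + 1) j = 0 := fun j hj => by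
    rw [transfer_apply_of_ne (by omega) (by omega), hz j hj]
  have hsupp : ∀ j, 1 ≤ transfer f a (a + 1) j → 1 ≤ f j := fun j hj => by
    by_cases hj' : 0 ≤ j ∧ j ≤ d
    · exact hpos j hj'.1 hj'.2
    · rw [hg_out j (by omega)] at hj; omega
  refine ⟨hg_out, ?_, ?_, ?_, ?_, ?_, ?_⟩
  · rw [transfer_apply_of_ne (by omega) (by omega), h0]
  · rw [sum_transfer (by omega) (mem_Icc.2 ⟨by omega, by omega⟩) (mem_Icc.2 ⟨by omega, by omega⟩),
      hsum]
  · intro i hi0 hid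
    rcases eq_or_ne i a with rfl | hia
    · rw [transfer_apply_left hne]; omega
    rcases eq_or_ne i (a + 1) with rfl | hib
    · rw [transfer_apply_right hne]; omega
    rw [transfer_apply_of_ne hia hib]
    exact hpos i hi0 hid
  · intro i hi0 hgi hgi1
    refine le_window4_transfer_succ (by omega) (hA4 i hi0 (hsupp i hgi) (hsupp _ hgi1))
      fun hia => ?_
    rw [show i - 1 = a - 3 by omega, show i + 1 = a - 1 by omega, hia, show i = a - 2 by omega]
    exact h4 (by omega)
  · intro i hi0 hgi
    refine le_window3_transfer_succ (by omega) (hA5 i hi0 (hsupp i hgi)) fun hia => ?_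
    rw [show i - 1 = a - 2 by omega, hia, show i = a - 1 by omega]
    exact h5
  · intro hg
    rcases eq_or_ne (a + 1) d with hlast | hlast
    · rw [show (d : ℤ) - 1 = a by omega, transfer_apply_left hne] at hg
      rw [show (d : ℤ) - 1 = a by omega, ← hlast, transfer_apply_left hne,
        transfer_apply_right hne]
      have := h6 hlast (by omega)
      omega
    · have key := transfer_apply_add_ite (b := a + 1) (by omega : 1 ≤ f a)
      have e₁ := key (d - 1); have e₂ := key d
      split_ifs at e₁ e₂ <;> omega

theorem transfer_last (hf : IsGoodSeq n δ d f) (hδ : 1 ≤ δ) (hfd : δ + 1 ≤ f d) :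
    IsGoodSeq n δ (d + 1) (transfer f d (d + 1)) := by
  obtain ⟨hz, h0, hsum, hpos, hA4, hA5, hA6⟩ := hf
  have hd : 1 ≤ d := by
    by_contra
    obtain rfl : d = 0 := by omega
    rw [Nat.cast_zero, h0] at hfd
    omega
  have hne : (d : ℤ) ≠ d + 1 := by omega
  have hlast_two : 2 * δ ≤ f (d - 1) + f d := by
    by_cases h : f (d - 1) ≤ δ - 1
    · exact hA6 h
    · omega
  have hg_out : ∀ j, (j < 0 ∨ ((d + 1 : ℕ) : ℤ) < j) → transfer f d (d + 1) j = 0 :=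
    fun j hj => by rw [transfer_apply_of_ne (by omega) (by omega), hz j (by omega)]
  have hg_in : ∀ j, 1 ≤ transfer f d (d + 1) j → 0 ≤ j ∧ j ≤ d + 1 := fun j hj => by
    by_contra
    rw [hg_out j (by omega)] at hj
    omega
  refine ⟨hg_out, ?_, ?_, ?_, ?_, ?_, ?_⟩
  · rw [transfer_apply_of_ne (by omega) (by omega), h0]
  · rw [sum_transfer (by omega) (mem_Icc.2 ⟨by omega, by omega⟩) (mem_Icc.2 ⟨by omega, by omega⟩),
      sum_Icc_zero_eq_of_le (fun j hj => hz j (.inr hj)) d.le_succ, hsum]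
  · intro i hi0 hid
    rcases eq_or_ne i d with rfl | hia
    · rw [transfer_apply_left hne]; omega
    rcases eq_or_ne i (d + 1) with rfl | hib
    · rw [transfer_apply_right hne]; omega
    rw [transfer_apply_of_ne hia hib]
    exact hpos i hi0 (by omega)
  · intro i hi0 hgi hgi1
    have hid : i ≤ d := by have := hg_in _ hgi1; omega
    refine le_window4_transfer_succ (by omega) ?_ fun hia => ?_
    · rcases hid.lt_or_eq with hid | rfl
      · exact hA4 i hi0 (hpos i hi0 hid.le) (hpos _ (by omega) (by omega))
      · rw [hz (d + 1) (by omega), hz (d + 2) (by omega)]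
        omega
    · have := hpos i hi0 hid
      rw [show i + 1 = (d : ℤ) - 1 by omega, hia]
      omega
  · intro i hi0 hgi
    have hid : i ≤ d + 1 := (hg_in i hgi).2
    refine le_window3_transfer_succ (by omega) ?_ fun hia => ?_
    · rcases (by omega : i ≤ d ∨ i = d + 1) with hid | rfl
      · exact hA5 i hi0 (hpos i hi0 hid)
      · rw [add_sub_cancel_right, hz (d + 1) (by omega), hz (d + 1 + 1) (by omega)]
        omega
    · have := hpos i hi0 (by omega)
      rw [hia]
      omega
  · rw [Nat.cast_succ, add_sub_cancel_right, transfer_apply_left hne]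
    omega

theorem delta_le_apply_one (hf : IsGoodSeq n δ d f) : δ ≤ f 1 := by
  obtain ⟨hz, h0, -, -, -, hA5, -⟩ := hf
  have : δ + 1 ≤ f (-1) + f 0 + f 1 := hA5 0 le_rfl (by omega)
  have := hz (-1) (by norm_num)
  omega

theorem two_mul_le_apply_one_add_apply_two (hf : IsGoodSeq n δ d f) (hd : 1 ≤ d) :
    2 * δ ≤ 1 + f 1 + f 2 := by
  obtain ⟨hz, h0, -, hpos, hA4, -, -⟩ := hf
  have : 2 * δ ≤ f (-1) + f 0 + f 1 + f 2 :=
    hA4 0 le_rfl (by omega) (hpos 1 (by norm_num) (by omega))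
  have := hz (-1) (by norm_num)
  omega

theorem sum_apply_zero_to_three (hf : IsGoodSeq n δ d f) (hd : d ≤ 3) :
    f 0 + f 1 + f 2 + f 3 = n := by
  rw [← hf.2.2.1, ← sum_Icc_zero_eq_of_le (fun j hj => hf.1 j (.inr hj)) hd,
    show Icc (0 : ℤ) ((3 : ℕ) : ℤ) = {0, 1, 2, 3} by rfl]
  simp [add_assoc]

end IsGoodSeq

def IsMaximal (n δ d : ℕ) (f : ℤ → ℕ) : Prop :=
  ∀ (d' : ℕ) (f' : ℤ → ℕ), IsGoodSeq n δ d' f' → gval d' f' ≤ gval d f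

namespace IsMaximal

variable {n δ d : ℕ} {f : ℤ → ℕ}

theorem apply_length_le (hmax : IsMaximal n δ d f) (hf : IsGoodSeq n δ d f) (hδ : 1 ≤ δ) :
    f d ≤ δ := by
  by_contra
  have := hmax _ _ (hf.transfer_last hδ (by omega))
  rw [gval_transfer_last (by omega) fun j hj => hf.1 j (.inr hj)] at this
  omega

theorem two_le_length (hmax : IsMaximal n δ d f) (hf : IsGoodSeq n δ d f) (hδ : 1 ≤ δ)
    (hn : δ + 2 ≤ n) : 2 ≤ d := by
  have hf1 := hf.delta_le_apply_one
  have hz : ∀ j, (d : ℤ) < j → f j = 0 := fun j hj => hf.1 j (.inr hj)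
  by_contra
  rcases (by omega : d = 0 ∨ d = 1) with rfl | rfl
  · have := hz 1 (by norm_num)
    omega
  · have hlast : f 1 ≤ δ := Nat.cast_one (R := ℤ) ▸ hmax.apply_length_le hf hδ
    have := hf.sum_apply_zero_to_three (by norm_num)
    have := hz 2 (by norm_num)
    have := hz 3 (by norm_num)
    have := hf.2.1
    omega

theorem apply_one_eq (hmax : IsMaximal n δ d f) (hf : IsGoodSeq n δ d f) (hδ : 1 ≤ δ)
    (hd : 2 ≤ d) : f 1 = δ := by
  refine le_antisymm ?_ hf.delta_le_apply_one
  by_contra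
  have hm1 : f (-1) = 0 := hf.1 (-1) (by norm_num)
  have h0 : f 0 = 1 := hf.2.1
  have := hmax _ _ (hf.transfer_succ (a := 1) (by omega) (by omega)
    (fun h => absurd h (by norm_num)) (show δ + 2 ≤ f (-1) + f 0 + f 1 by omega)
    (fun _ h => absurd h (by omega)))
  rw [gval_transfer_succ (by omega) (by norm_num) (by omega)] at this
  omega

theorem apply_two_lt (hmax : IsMaximal n δ d f) (hf : IsGoodSeq n δ d f) (hδ : 2 ≤ δ)
    (hn : 3 * δ + 1 ≤ n) (hd : 2 ≤ d) (h1 : f 1 = δ) : f 2 < δ := by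
  have hm1 : f (-1) = 0 := hf.1 (-1) (by norm_num)
  have h0 : f 0 = 1 := hf.2.1
  by_contra
  rcases (by omega : d = 2 ∨ 3 ≤ d) with rfl | hd3
  · have hlast : f 2 ≤ δ := Nat.cast_ofNat (R := ℤ) (n := 2) ▸ hmax.apply_length_le hf (by omega)
    have := hf.sum_apply_zero_to_three (by norm_num)
    have := hf.1 3 (.inr (by norm_num))
    omega
  · have := hmax _ _ (hf.transfer_succ (a := 2) (by omega) (by omega)
      (fun _ => show 2 * δ + 1 ≤ f (-1) + f 0 + f 1 + f 2 by omega)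
      (show δ + 2 ≤ f 0 + f 1 + f 2 by omega) (fun hlast _ => ?_))
    · rw [gval_transfer_succ (by omega) (by norm_num) (by omega)] at this
      omega
    · have := hf.sum_apply_zero_to_three (by omega)
      show 2 * δ ≤ f 2 + f 3
      omega

end IsMaximal

/-- If `δ ≥ 2`, `n ≥ 6δ`, and the sequence `X` satisfies (A1)–(A6) and maximizes
`g` among all such sequences (of any length), then `n₂ = δ - 1`. -/
theorem second_entry_of_maximal_seq (n δ : ℕ) (hδ : 2 ≤ δ) (hn : 6 * δ ≤ n)
    (d : ℕ) (f : ℤ → ℕ) (hf : IsGoodSeq n δ d f)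
    (hmax : ∀ (d' : ℕ) (f' : ℤ → ℕ), IsGoodSeq n δ d' f' → gval d' f' ≤ gval d f) :
    f 2 = δ - 1 := by
  have hd := IsMaximal.two_le_length hmax hf (by omega) (by omega)
  have h1 := IsMaximal.apply_one_eq hmax hf (by omega) hd
  have h2 := IsMaximal.apply_two_lt hmax hf hδ (by omega) hd h1
  have := hf.two_mul_le_apply_one_add_apply_two (by omega)
  omega
end

section
/- Let X = (n₀,…,n_d) be a sequence of positive integers satisfying conditions (A1)–(A6) with parameters n, δ, where δ ≥ 2 and n ≥ 6δ, and suppose some index j with 2 ≤ j ≤ d-2 has n_j ≥ δ. Then the sequence X* obtained from X by decreasing n_j by 1 and increasing n_{j+1} by 1 also satisfies (A1)–(A6), and g(X*) = g(X) + 1. -/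
/-!
Moving a unit from position `j` to `j + 1` leaves every window sum unchanged or larger, except
for windows whose last position is `j`, which lose one. Such a window is `(j-2, j-1, j)` in (A5),
with sum at least `1 + 1 + (δ - 1)`, or `(j-3, …, j)` in (A4), whose sum is at least
`(δ + 1) + (δ - 1)` by (A5) at `j - 2`; both bounds use `n_j ≥ δ`. Since `j ≤ d - 2`, the
entries in (A6) can only grow, and `n_j ≥ 2` keeps every entry positive.
-/

open Finset

def shiftUnit (f : ℤ → ℕ) (j : ℤ) : ℤ → ℕ :=
  fun k => if k = j then f j - 1 else if k = j + 1 then f (j + 1) + 1 else f k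

section shiftUnit

variable {f : ℤ → ℕ} {j k i : ℤ}

lemma shiftUnit_self : shiftUnit f j j = f j - 1 := if_pos rfl

lemma shiftUnit_of_ne (h : k ≠ j) (h' : k ≠ j + 1) : shiftUnit f j k = f k := by
  simp [shiftUnit, h, h']

lemma shiftUnit_le (h : k ≠ j + 1) : shiftUnit f j k ≤ f k := by
  unfold shiftUnit; split_ifs <;> subst_vars <;> omega

lemma le_shiftUnit (h : k ≠ j) : f k ≤ shiftUnit f j k := by
  unfold shiftUnit; split_ifs <;> subst_vars <;> omega

lemma cast_shiftUnit (hfj : 1 ≤ f j) (k : ℤ) :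
    (shiftUnit f j k : ℤ) = f k - (if k = j then 1 else 0) + (if k = j + 1 then 1 else 0) := by
  unfold shiftUnit
  split_ifs <;> subst_vars <;> omega

lemma sum_mul_shiftUnit (w : ℤ → ℤ) {s : Finset ℤ} (hj : j ∈ s) (hj' : j + 1 ∈ s)
    (hfj : 1 ≤ f j) :
    ∑ k ∈ s, w k * shiftUnit f j k = ∑ k ∈ s, w k * f k - w j + w (j + 1) := by
  simp only [cast_shiftUnit hfj, mul_add, mul_sub, mul_ite, mul_one, mul_zero, sum_add_distrib,
    sum_sub_distrib, sum_ite_eq', if_pos hj, if_pos hj']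

lemma sum_shiftUnit {s : Finset ℤ} (hj : j ∈ s) (hj' : j + 1 ∈ s) (hfj : 1 ≤ f j) :
    ∑ k ∈ s, shiftUnit f j k = ∑ k ∈ s, f k := by
  have := sum_mul_shiftUnit (fun _ => 1) hj hj' hfj
  simp only [one_mul, sub_add_cancel] at this
  exact_mod_cast this

lemma gval_shiftUnit {d : ℕ} (hj : 0 ≤ j) (hjd : j + 1 ≤ d) (hfj : 1 ≤ f j) :
    gval d (shiftUnit f j) = gval d f + 1 := by
  have := sum_mul_shiftUnit id (mem_Icc.2 ⟨hj, by omega⟩) (mem_Icc.2 ⟨by omega, hjd⟩) hfj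
  simp only [id] at this
  rw [gval, gval, this]
  ring

lemma window_three_le_shiftUnit (hfj : 1 ≤ f j) (i : ℤ) :
    f (i - 1) + f i + f (i + 1) ≤
      shiftUnit f j (i - 1) + shiftUnit f j i + shiftUnit f j (i + 1) +
        if i = j - 1 then 1 else 0 := by
  zify
  simp only [cast_shiftUnit hfj]
  split_ifs <;> omega

lemma window_four_le_shiftUnit (hfj : 1 ≤ f j) (i : ℤ) :
    f (i - 1) + f i + f (i + 1) + f (i + 2) ≤
      shiftUnit f j (i - 1) + shiftUnit f j i + shiftUnit f j (i + 1) + shiftUnit f j (i + 2) +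
        if i = j - 2 then 1 else 0 := by
  zify
  simp only [cast_shiftUnit hfj]
  split_ifs <;> omega

end shiftUnit

theorem IsGoodSeq.shiftUnit {n δ d : ℕ} {f : ℤ → ℕ} {j : ℤ} (hf : IsGoodSeq n δ d f)
    (hj2 : 2 ≤ j) (hjd : j ≤ (d : ℤ) - 2) (hjδ : δ ≤ f j) (hfj : 2 ≤ f j) :
    IsGoodSeq n δ d (_root_.shiftUnit f j) := by
  obtain ⟨hsupp, h0, hsum, hpos, hA4, hA5, hA6⟩ := hf
  have hpos_of : ∀ i, 0 ≤ i → 1 ≤ _root_.shiftUnit f j i → 1 ≤ f i := fun i hi h => by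
    by_cases hij : i = j + 1
    · exact hij ▸ hpos _ (by omega) (by omega)
    · exact h.trans (shiftUnit_le hij)
  refine ⟨fun i hi => ?_, ?_, ?_, fun i hi hid => ?_, fun i hi h h' => ?_, fun i hi h => ?_,
    fun h => ?_⟩
  · rw [shiftUnit_of_ne (by omega) (by omega)]
    exact hsupp i hi
  · rwa [shiftUnit_of_ne (by omega) (by omega)]
  · rwa [sum_shiftUnit (mem_Icc.2 ⟨by omega, by omega⟩) (mem_Icc.2 ⟨by omega, by omega⟩)
      (by omega)]
  · by_cases hij : i = j
    · rw [hij, shiftUnit_self]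
      omega
    · exact (hpos i hi hid).trans (le_shiftUnit hij)
  · have hwin := window_four_le_shiftUnit (by omega : 1 ≤ f j) i
    by_cases hij : i = j - 2
    · rw [if_pos hij] at hwin
      have : f (i + 2) = f j := congrArg f (by omega)
      have := hA5 i hi (hpos i hi (by omega))
      omega
    · rw [if_neg hij, add_zero] at hwin
      exact (hA4 i hi (hpos_of i hi h) (hpos_of _ (by omega) h')).trans hwin
  · have hwin := window_three_le_shiftUnit (by omega : 1 ≤ f j) i
    by_cases hij : i = j - 1
    · rw [if_pos hij] at hwin
      have : f (i + 1) = f j := congrArg f (by omega)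
      have := hpos (i - 1) (by omega) (by omega)
      have := hpos i (by omega) (by omega)
      omega
    · rw [if_neg hij, add_zero] at hwin
      exact (hA5 i hi (hpos_of i hi h)).trans hwin
  · have hd : _root_.shiftUnit f j d = f d := shiftUnit_of_ne (by omega) (by omega)
    have hd1 : f (d - 1) ≤ _root_.shiftUnit f j (d - 1) := le_shiftUnit (by omega)
    have := hA6 (by omega)
    omega

theorem shift_of_large_entry_general (n δ : ℕ) (hδ : 2 ≤ δ)
    (d : ℕ) (f : ℤ → ℕ) (hf : IsGoodSeq n δ d f)
    (j : ℤ) (hj2 : 2 ≤ j) (hjd : j ≤ (d : ℤ) - 2) (hjδ : δ ≤ f j) :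
    IsGoodSeq n δ d
      (fun k => if k = j then f j - 1 else if k = j + 1 then f (j + 1) + 1 else f k) ∧
    gval d (fun k => if k = j then f j - 1 else if k = j + 1 then f (j + 1) + 1 else f k)
      = gval d f + 1 :=
  ⟨hf.shiftUnit hj2 hjd hjδ (hδ.trans hjδ),
    gval_shiftUnit (by omega) (by omega) (by omega)⟩

/-- If `X` satisfies (A1)–(A6) with `δ ≥ 2`, `n ≥ 6δ`, and `n_j ≥ δ` for some
`2 ≤ j ≤ d - 2`, then the sequence obtained by moving one unit from position `j`
to position `j + 1` still satisfies (A1)–(A6), and its weight is `g(X) + 1`. -/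
theorem shift_of_large_entry (n δ : ℕ) (hδ : 2 ≤ δ) (hn : 6 * δ ≤ n)
    (d : ℕ) (f : ℤ → ℕ) (hf : IsGoodSeq n δ d f)
    (j : ℤ) (hj2 : 2 ≤ j) (hjd : j ≤ (d : ℤ) - 2) (hjδ : δ ≤ f j) :
    IsGoodSeq n δ d
      (fun k => if k = j then f j - 1 else if k = j + 1 then f (j + 1) + 1 else f k) ∧
    gval d (fun k => if k = j then f j - 1 else if k = j + 1 then f (j + 1) + 1 else f k)
      = gval d f + 1 :=
  shift_of_large_entry_general n δ hδ d f hf j hj2 hjd hjδ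
end
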